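/- arXiv:math/9210213 — 4 statements merged into one kernel-verified Lean document; each statement's English description precedes it below -/
import Mathlib

section
/- For every d ≥ 1 and every q ≤ d, there exists a family of compact convex sets in R^d with the (q,q) property whose piercing number is infinite; i.e., for each n there is a finite family of compact convex sets in R^d in which any q members have a common point, but which cannot be pierced by n points. -/
/-!
Use the hyperplanes `H t = {x | t ^ d + ∑ j, x j * t ^ j = 0}` in `ℝ^d`: a point `x` lies on
`H t` exactly when `t` is a root of the monic polynomial `X ^ d + ∑ j, x j * X ^ j`. Hence any
`q ≤ d` of them meet (choose the monic polynomial with those roots) while a point lies on at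
most `d` of them. Given `n`, take `n * d + 1` such hyperplanes, cut down to a ball containing a
point of each `q`-fold intersection: `n` points hit at most `n * d` of these compact convex sets.
-/

open Polynomial Finset Metric

lemma exists_forall_notMem_of_card_mul_lt {ι α : Type*} [Fintype ι] (F : ι → Set α) (d : ℕ)
    (hF : ∀ x, {i | x ∈ F i}.ncard ≤ d) (X : Finset α) (hX : X.card * d < Fintype.card ι) :
    ∃ i, ∀ x ∈ X, x ∉ F i := by
  classical
  by_contra! h
  have hcover : (univ : Finset ι) ⊆ X.biUnion fun x => {i | x ∈ F i}.toFinset := fun i _ => by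
    obtain ⟨x, hx, hi⟩ := h i
    simpa using ⟨x, hx, hi⟩
  have hcard : Fintype.card ι ≤ X.card * d :=
    calc Fintype.card ι ≤ ∑ x ∈ X, {i | x ∈ F i}.toFinset.card :=
          (card_le_card hcover).trans card_biUnion_le
      _ ≤ ∑ _x ∈ X, d := sum_le_sum fun x _ => by
          rw [← Set.ncard_eq_toFinset_card']
          exact hF x
      _ = X.card * d := by rw [sum_const, smul_eq_mul]
  omega

lemma exists_closedBall_forall_biInter_inter_nonempty {ι E : Type*} [Finite ι]
    [PseudoMetricSpace E] (F : ι → Set E) (P : Finset ι → Prop)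
    (hF : ∀ S, P S → (⋂ i ∈ S, F i).Nonempty) (c : E) :
    ∃ R, ∀ S, P S → (⋂ i ∈ S, F i ∩ closedBall c R).Nonempty := by
  choose p hp using fun S : {S // P S} => hF S S.2
  obtain ⟨R, hR⟩ := (Set.finite_range p).isBounded.subset_closedBall c
  refine ⟨R, fun S hS => ⟨p ⟨S, hS⟩, Set.mem_iInter₂.mpr fun i hi => ⟨?_, hR ⟨_, rfl⟩⟩⟩⟩
  exact Set.mem_iInter₂.mp (hp ⟨S, hS⟩) i hi

section Moment

variable {d : ℕ}

noncomputable def monicOfCoeffs (x : Fin d → ℝ) : ℝ[X] :=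
  X ^ d + ∑ j : Fin d, C (x j) * X ^ (j : ℕ)

lemma monicOfCoeffs_monic (x : Fin d → ℝ) : (monicOfCoeffs x).Monic :=
  monic_X_pow_add (degree_sum_fin_lt x)

lemma natDegree_monicOfCoeffs (x : Fin d → ℝ) : (monicOfCoeffs x).natDegree = d := by
  rw [monicOfCoeffs, natDegree_add_eq_left_of_degree_lt, natDegree_X_pow]
  simpa using degree_sum_fin_lt x

lemma monicOfCoeffs_coeff {p : ℝ[X]} (hp : p.Monic) (hd : p.natDegree = d) :
    monicOfCoeffs (fun j : Fin d => p.coeff j) = p := by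
  conv_rhs => rw [hp.as_sum, hd]
  rw [monicOfCoeffs, Fin.sum_univ_eq_sum_range (fun j => C (p.coeff j) * X ^ j)]

def momentHyperplane (d : ℕ) (t : ℝ) : Set (Fin d → ℝ) :=
  {x | Fintype.linearCombination ℝ (fun j : Fin d => t ^ (j : ℕ)) x = -t ^ d}

lemma mem_momentHyperplane_iff_isRoot {x : Fin d → ℝ} {t : ℝ} :
    x ∈ momentHyperplane d t ↔ (monicOfCoeffs x).IsRoot t := by
  simp only [momentHyperplane, Set.mem_ofPred_eq, Fintype.linearCombination_apply, smul_eq_mul,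
    IsRoot, monicOfCoeffs, eval_add, eval_pow, eval_X, eval_finsetSum, eval_mul, eval_C]
  constructor <;> intro h <;> linarith

lemma isClosed_momentHyperplane (t : ℝ) : IsClosed (momentHyperplane d t) :=
  isClosed_eq (LinearMap.continuous_of_finiteDimensional _) continuous_const

lemma convex_momentHyperplane (t : ℝ) : Convex ℝ (momentHyperplane d t) :=
  convex_hyperplane (LinearMap.isLinear _) _

lemma exists_forall_mem_momentHyperplane (T : Finset ℝ) (hT : T.card ≤ d) :
    ∃ x : Fin d → ℝ, ∀ t ∈ T, x ∈ momentHyperplane d t := by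
  set p : ℝ[X] := X ^ (d - T.card) * ∏ a ∈ T, (X - C a)
  have hroots := monic_prod_of_monic T (fun a => X - C a) fun a _ => monic_X_sub_C a
  have hp : p.Monic := (monic_X_pow _).mul hroots
  have hdeg : p.natDegree = d := by
    rw [(monic_X_pow _).natDegree_mul hroots, natDegree_X_pow, natDegree_prod_of_monic _ _
      fun a _ => monic_X_sub_C a]
    simp only [natDegree_X_sub_C, sum_const, smul_eq_mul, mul_one]
    omega
  refine ⟨fun j => p.coeff j, fun t ht => ?_⟩
  rw [mem_momentHyperplane_iff_isRoot, monicOfCoeffs_coeff hp hdeg, IsRoot, eval_mul,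
    eval_prod, prod_eq_zero ht (by simp), mul_zero]

lemma ncard_mem_momentHyperplane_le {ι : Type*} {t : ι → ℝ} (ht : Function.Injective t)
    (x : Fin d → ℝ) : {i | x ∈ momentHyperplane d (t i)}.ncard ≤ d := by
  have hp : monicOfCoeffs x ≠ 0 := (monicOfCoeffs_monic x).ne_zero
  calc {i | x ∈ momentHyperplane d (t i)}.ncard
      ≤ ((monicOfCoeffs x).roots.toFinset : Set ℝ).ncard :=
        Set.ncard_le_ncard_of_injOn t (fun i hi => by
          simpa [mem_roots hp] using mem_momentHyperplane_iff_isRoot.mp hi) ht.injOn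
    _ ≤ Multiset.card (monicOfCoeffs x).roots := by
        rw [Set.ncard_coe_finset]
        exact Multiset.toFinset_card_le _
    _ ≤ d := (card_roots' _).trans (natDegree_monicOfCoeffs x).le

end Moment

theorem unbounded_piercing_q_le_d_general (d q : ℕ) (hq : q ≤ d) (n : ℕ) :
    ∃ (ι : Type) (_ : Fintype ι) (F : ι → Set (Fin d → ℝ)),
      (∀ i, IsCompact (F i) ∧ Convex ℝ (F i)) ∧
      (∀ S : Finset ι, S.card = q → (⋂ i ∈ S, F i).Nonempty) ∧
      (∀ X : Finset (Fin d → ℝ), X.card ≤ n → ∃ i, ∀ x ∈ X, x ∉ F i) := by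
  let t : Fin (n * d + 1) → ℝ := fun i => (i : ℕ)
  have ht : Function.Injective t := fun a b h => Fin.ext (Nat.cast_injective h)
  let H i := momentHyperplane d (t i)
  have hH : ∀ S : Finset _, S.card = q → (⋂ i ∈ S, H i).Nonempty := fun S hS => by
    obtain ⟨x, hx⟩ :=
      exists_forall_mem_momentHyperplane (S.image t) ((card_image_le.trans_eq hS).trans hq)
    exact ⟨x, Set.mem_iInter₂.mpr fun i hi => hx _ (mem_image_of_mem t hi)⟩
  obtain ⟨R, hR⟩ := exists_closedBall_forall_biInter_inter_nonempty H _ hH 0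
  refine ⟨_, inferInstance, fun i => H i ∩ closedBall 0 R, fun i => ⟨?_, ?_⟩, hR, fun X hX => ?_⟩
  · exact (isCompact_closedBall 0 R).inter_left (isClosed_momentHyperplane _)
  · exact (convex_momentHyperplane _).inter (convex_closedBall 0 R)
  · obtain ⟨i, hi⟩ := exists_forall_notMem_of_card_mul_lt H d (ncard_mem_momentHyperplane_le ht) X
      (by rw [Fintype.card_fin]; exact Nat.lt_succ_of_le (Nat.mul_le_mul_right d hX))
    exact ⟨i, fun x hx hxi => hi x hx hxi.1⟩

/-- For q ≤ d the piercing number can be infinite: for every n there is a finite family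
of compact convex sets in ℝ^d, any q of which have a common point, that cannot be pierced
by n points. -/
theorem unbounded_piercing_q_le_d (d q : ℕ) (hd : 1 ≤ d) (hq : q ≤ d) (n : ℕ) :
    ∃ (ι : Type) (_ : Fintype ι) (F : ι → Set (Fin d → ℝ)),
      (∀ i, IsCompact (F i) ∧ Convex ℝ (F i)) ∧
      (∀ S : Finset ι, S.card = q → (⋂ i ∈ S, F i).Nonempty) ∧
      (∀ X : Finset (Fin d → ℝ), X.card ≤ n → ∃ i, ∀ x ∈ X, x ∉ F i) :=
  unbounded_piercing_q_le_d_general d q hq n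
end

section
/- For every ε > 0 and every dimension d there is a finite constant c = c(ε,d) such that for every probability measure μ on R^d there exists a set X of at most c points in R^d with the property that every compact convex set K in R^d with μ(K) ≥ ε contains a point of X. -/
/-!
Induction on the dimension, splitting off the first coordinate. For a probability measure `μ` on
`ℝ^(d+1)` and `δ = ε / 5`, quantiles of the first coordinate give levels `t₀, …, tₙ`, with `n`
depending on `δ` only, such that each of `{x₀ < t₀}`, `{t_k < x₀ < t_{k+1}}` and `{x₀ > tₙ}` has
mass at most `δ`. Walking along the levels, a set `K` of mass at least `5δ` has, at some level `t`,
either mass `≥ δ` on the hyperplane `H = {x₀ = t}`, or mass `≥ δ` on each side of `H`. In the first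
case `K ∩ H` is heavy for the trace of `μ` on `H`. In the second, when `K` is convex, every segment
from a point of `K` below `H` to a point of `K` above `H` crosses `H` inside `K ∩ H`, so `K ∩ H` has
mass `≥ δ²` for the image of `μ|below ⊗ μ|above` under the crossing point. Weak nets in dimension
`d` for these measures, at scales `δ` and `δ²`, lifted to the `n + 1` hyperplanes, form a weak net
for `μ` whose size depends only on `ε` and `d`.
-/

open MeasureTheory Set Filter Topology
open scoped ENNReal

section Quantiles

variable (ρ : Measure ℝ)

theorem exists_measure_Iio_le_le_measure_Iic [IsFiniteMeasure ρ] {q : ℝ≥0∞} (hq₀ : 0 < q)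
    (hq : q < ρ univ) : ∃ t, ρ (Iio t) ≤ q ∧ q ≤ ρ (Iic t) := by
  set S := {r | q ≤ ρ (Iic r)}
  have hS : S.Nonempty :=
    (((tendsto_measure_Iic_atTop ρ).eventually (eventually_gt_nhds hq)).exists).imp
      fun _ h => h.le
  have hS_bdd : BddBelow S := by
    have h_bot : Tendsto (fun r => ρ (Iic r)) atBot (𝓝 0) := by
      have h := tendsto_measure_iInter_atBot (μ := ρ) (s := Iic)
        (fun r => measurableSet_Iic.nullMeasurableSet) monotone_Iic ⟨0, measure_ne_top ρ _⟩
      rwa [iInter_Iic_eq_empty_iff.2 (by simp), measure_empty] at h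
    obtain ⟨r₀, hr₀⟩ := (h_bot.eventually (eventually_lt_nhds hq₀)).exists_forall_of_atBot
    exact ⟨r₀, fun r hr => le_of_not_gt fun hlt => (hr₀ r hlt.le).not_ge hr⟩
  refine ⟨sInf S, ?_, ?_⟩
  · obtain ⟨u, hu_mono, hu_lt, hu⟩ := exists_seq_strictMono_tendsto (sInf S)
    rw [← iUnion_Iic_eq_Iio_of_lt_of_tendsto hu_lt hu,
      Monotone.measure_iUnion (s := fun n => Iic (u n)) (monotone_Iic.comp hu_mono.monotone)]
    exact iSup_le fun n => le_of_not_ge fun h => notMem_of_lt_csInf (hu_lt n) hS_bdd h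
  · have h_right := tendsto_measure_biInter_gt (μ := ρ) (s := Iic) (a := sInf S)
      (fun r _ => measurableSet_Iic.nullMeasurableSet) (fun _ _ _ h => Iic_subset_Iic.2 h)
      ⟨sInf S + 1, by linarith, measure_ne_top ρ _⟩
    have h_inter : ⋂ r > sInf S, Iic r = Iic (sInf S) := by
      ext x
      simpa using ⟨le_of_forall_gt_imp_ge_of_dense, fun hx r hr => hx.trans hr.le⟩
    rw [h_inter] at h_right
    refine ge_of_tendsto h_right (eventually_nhdsWithin_of_forall fun r hr => ?_)
    obtain ⟨s, hs, hsr⟩ := exists_lt_of_csInf_lt hS hr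
    exact hs.trans (measure_mono (Iic_subset_Iic.2 hsr.le))

theorem exists_levels_measure_gaps_le [IsProbabilityMeasure ρ] (n : ℕ) :
    ∃ t : ℕ → ℝ, ρ (Iio (t 0)) ≤ ((n : ℝ≥0∞) + 2)⁻¹ ∧
      (∀ k < n, ρ (Ioo (t k) (t (k + 1))) ≤ ((n : ℝ≥0∞) + 2)⁻¹) ∧
      ρ (Ioi (t n)) ≤ ((n : ℝ≥0∞) + 2)⁻¹ := by
  set η : ℝ≥0∞ := ((n : ℝ≥0∞) + 2)⁻¹
  have h_total : ((n : ℝ≥0∞) + 2) * η = 1 :=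
    ENNReal.mul_inv_cancel (by positivity) (by simp)
  have h_level : ∀ k ≤ n, ∃ t, ρ (Iio t) ≤ (k + 1) * η ∧ (k + 1) * η ≤ ρ (Iic t) := by
    intro k hk
    refine exists_measure_Iio_le_le_measure_Iic ρ (by simp [η]) ?_
    calc ((k : ℝ≥0∞) + 1) * η < (n + 2) * η :=
          ENNReal.mul_lt_mul_left (by simp [η]) (by simp [η]) (by exact_mod_cast (by omega))
      _ = ρ univ := by rw [h_total, measure_univ]
  choose! t ht using h_level
  refine ⟨t, by simpa using (ht 0 n.zero_le).1, fun k hk => ?_, ?_⟩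
  · rcases le_or_gt (t (k + 1)) (t k) with hle | hlt
    · simp [Ioo_eq_empty_of_le hle]
    rw [show Ioo (t k) (t (k + 1)) = Iio (t (k + 1)) \ Iic (t k) by ext; simp,
      measure_sdiff_le_iff_le_add measurableSet_Iic.nullMeasurableSet
      (Iic_subset_Iio.2 hlt) (measure_ne_top _ _)]
    calc ρ (Iio (t (k + 1))) ≤ (k + 1 + 1) * η := by exact_mod_cast (ht (k + 1) hk).1
      _ = (k + 1) * η + η := by ring
      _ ≤ ρ (Iic (t k)) + η := by gcongr; exact (ht k hk.le).2
  · rw [← compl_Iic, prob_compl_eq_one_sub measurableSet_Iic, tsub_le_iff_right, ← h_total]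
    calc ((n : ℝ≥0∞) + 2) * η = η + (n + 1) * η := by ring
      _ ≤ η + ρ (Iic (t n)) := by gcongr; exact (ht n le_rfl).2

end Quantiles

theorem measure_Iio_add_measure_singleton_add_measure_Ioi (κ : Measure ℝ) (t : ℝ) :
    κ (Iio t) + κ {t} + κ (Ioi t) = κ univ := by
  rw [← measure_union (by simp) (measurableSet_singleton t), Iio_union_right,
    ← measure_union (Iic_disjoint_Ioi le_rfl) measurableSet_Ioi, Iic_union_Ioi]

theorem exists_level_heavy_or_split {κ : Measure ℝ} [IsFiniteMeasure κ] {δ : ℝ≥0∞}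
    {n : ℕ} {t : ℕ → ℝ} (h_first : κ (Iio (t 0)) ≤ δ)
    (h_gap : ∀ k < n, κ (Ioo (t k) (t (k + 1))) ≤ δ) (h_last : κ (Ioi (t n)) ≤ δ)
    (hκ : 5 * δ ≤ κ univ) :
    ∃ k ≤ n, δ ≤ κ {t k} ∨ δ ≤ κ (Iio (t k)) ∧ δ ≤ κ (Ioi (t k)) := by
  by_contra! h
  -- Otherwise the mass left of every level stays below `δ`, which leaves less than `3δ` in all.
  have h_left_small : ∀ k ≤ n, κ (Iio (t k)) ≤ 3 * δ → κ (Iio (t k)) < δ := by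
    intro k hk h_le
    by_contra! h_ge
    refine (hκ.trans_lt ?_).false
    calc κ univ = κ (Iio (t k)) + κ {t k} + κ (Ioi (t k)) :=
          (measure_Iio_add_measure_singleton_add_measure_Ioi κ _).symm
      _ < 3 * δ + δ + δ := ENNReal.add_lt_add
          (ENNReal.add_lt_add_of_le_of_lt (measure_ne_top _ _) h_le (h k hk).1)
          ((h k hk).2 h_ge)
      _ = 5 * δ := by ring
  have h_left : ∀ k ≤ n, κ (Iio (t k)) < δ := by
    intro k
    induction k with
    | zero =>
      exact fun _ => h_left_small 0 n.zero_le (h_first.trans (le_mul_of_one_le_left' (by norm_num)))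
    | succ k ih =>
      intro hk
      refine h_left_small (k + 1) hk ?_
      calc κ (Iio (t (k + 1))) ≤ κ (Iio (t k) ∪ {t k} ∪ Ioo (t k) (t (k + 1))) := by
            rw [Iio_union_right]; exact measure_mono Iio_subset_Iic_union_Ioo
        _ ≤ κ (Iio (t k)) + κ {t k} + κ (Ioo (t k) (t (k + 1))) :=
            (measure_union_le _ _).trans (add_le_add_left (measure_union_le _ _) _)
        _ ≤ δ + δ + δ := by
            gcongr
            exacts [(ih (by omega)).le, ((h k (by omega)).1).le, h_gap k hk]
        _ = 3 * δ := by ring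
  refine (hκ.trans_lt ?_).false
  calc κ univ = κ (Iio (t n)) + κ {t n} + κ (Ioi (t n)) :=
        (measure_Iio_add_measure_singleton_add_measure_Ioi κ _).symm
    _ < δ + δ + δ := ENNReal.add_lt_add_of_lt_of_le (measure_ne_top _ _)
        (ENNReal.add_lt_add (h_left n le_rfl) (h n le_rfl).1) h_last
    _ = 3 * δ := by ring
    _ ≤ 5 * δ := by gcongr; norm_num

section WeakNets

variable {E : Type*} [TopologicalSpace E] [AddCommGroup E] [Module ℝ E] [MeasurableSpace E]

def IsWeakNet (μ : Measure E) (ε : ℝ≥0∞) (X : Set E) : Prop :=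
  ∀ K : Set E, IsCompact K → Convex ℝ K → ε ≤ μ K → (X ∩ K).Nonempty

variable (E) in
def HasWeakNetsOfCard (ε : ℝ≥0∞) (c : ℕ) : Prop :=
  ∀ μ : Measure E, IsProbabilityMeasure μ → ∃ X : Finset E, X.card ≤ c ∧ IsWeakNet μ ε X

variable {μ ν : Measure E} {ε : ℝ≥0∞} {X : Set E} {c : ℕ}

theorem IsWeakNet.mono_measure (hX : IsWeakNet ν ε X) (h : μ ≤ ν) : IsWeakNet μ ε X :=
  fun K hK hKc hμK => hX K hK hKc (hμK.trans (Measure.le_iff'.1 h K))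

theorem isWeakNet_empty (h : μ univ < ε) : IsWeakNet μ ε ∅ :=
  fun K _ _ hμK => ((hμK.trans (measure_mono (subset_univ K))).not_gt h).elim

theorem HasWeakNetsOfCard.exists_of_measure_univ_le_one (h : HasWeakNetsOfCard E ε c)
    (hε : 0 < ε) (hν : ν univ ≤ 1) : ∃ X : Finset E, X.card ≤ c ∧ IsWeakNet ν ε X := by
  rcases lt_or_ge (ν univ) ε with h_lt | h_ge
  · exact ⟨∅, by simp, by simpa using isWeakNet_empty h_lt⟩
  have h_ne_zero : ν univ ≠ 0 := (hε.trans_le h_ge).ne'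
  have h_ne_top : ν univ ≠ ⊤ := (hν.trans_lt ENNReal.one_lt_top).ne
  have : IsProbabilityMeasure ((ν univ)⁻¹ • ν) :=
    ⟨by simp [ENNReal.inv_mul_cancel h_ne_zero h_ne_top]⟩
  obtain ⟨X, hX_card, hX⟩ := h _ this
  exact ⟨X, hX_card, hX.mono_measure <| Measure.le_iff'.2 fun s =>
    le_mul_of_one_le_left' (ENNReal.one_le_inv.2 hν)⟩

end WeakNets

section Slices

variable {d : ℕ}

theorem continuous_vecTail : Continuous (Matrix.vecTail : (Fin (d + 1) → ℝ) → Fin d → ℝ) :=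
  continuous_pi fun i => continuous_apply i.succ

/-- The hyperplane `{x | x 0 = t}` is identified with `ℝ^d` by dropping the first coordinate; the
inverse identification is `Matrix.vecCons t`. -/
def hyperplaneSlice (K : Set (Fin (d + 1) → ℝ)) (t : ℝ) : Set (Fin d → ℝ) :=
  Matrix.vecTail '' (K ∩ {x | x 0 = t})

variable {K : Set (Fin (d + 1) → ℝ)} {t : ℝ}

theorem IsCompact.hyperplaneSlice (hK : IsCompact K) (t : ℝ) :
    IsCompact (hyperplaneSlice K t) :=
  (hK.inter_right (isClosed_eq (continuous_apply 0) continuous_const)).image continuous_vecTail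

theorem Convex.hyperplaneSlice (hK : Convex ℝ K) (t : ℝ) : Convex ℝ (hyperplaneSlice K t) :=
  (hK.inter (convex_hyperplane (LinearMap.proj (R := ℝ) (φ := fun _ => ℝ) 0).isLinear t)
    ).is_linear_image (f := Matrix.vecTail) ⟨fun _ _ => rfl, fun _ _ => rfl⟩

theorem vecCons_mem_of_mem_hyperplaneSlice {y : Fin d → ℝ} (hy : y ∈ hyperplaneSlice K t) :
    Matrix.vecCons t y ∈ K := by
  obtain ⟨x, ⟨hxK, rfl⟩, rfl⟩ := hy
  rwa [← Matrix.cons_head_tail x] at hxK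

theorem IsWeakNet.exists_vecCons_mem {ν : Measure (Fin d → ℝ)} {δ : ℝ≥0∞} {X : Set (Fin d → ℝ)}
    (hX : IsWeakNet ν δ X) (hK : IsCompact K) (hKc : Convex ℝ K)
    (h : δ ≤ ν (hyperplaneSlice K t)) : ∃ y ∈ X, Matrix.vecCons t y ∈ K :=
  let ⟨y, hyX, hyK⟩ := hX _ (hK.hyperplaneSlice t) (hKc.hyperplaneSlice t) h
  ⟨y, hyX, vecCons_mem_of_mem_hyperplaneSlice hyK⟩

noncomputable def traceMeasure (μ : Measure (Fin (d + 1) → ℝ)) (t : ℝ) :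
    Measure (Fin d → ℝ) :=
  (μ.restrict {x | x 0 = t}).map Matrix.vecTail

variable (μ : Measure (Fin (d + 1) → ℝ))

theorem traceMeasure_univ_le : traceMeasure μ t univ ≤ μ univ := by
  rw [traceMeasure, Measure.map_apply continuous_vecTail.measurable MeasurableSet.univ]
  exact Measure.restrict_apply_le _ _

theorem measure_inter_le_traceMeasure (K : Set (Fin (d + 1) → ℝ)) :
    μ (K ∩ {x | x 0 = t}) ≤ traceMeasure μ t (hyperplaneSlice K t) :=
  (Measure.restrict_eq_self μ inter_subset_right).symm.trans_le
    (Measure.le_map_apply_image continuous_vecTail.aemeasurable _)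

/-- Where the line through `p.1` and `p.2` meets `{x | x 0 = t}`; a junk value when
`p.1 0 = p.2 0`. -/
noncomputable def segmentCrossing (t : ℝ) (p : (Fin (d + 1) → ℝ) × (Fin (d + 1) → ℝ)) :
    Fin d → ℝ :=
  Matrix.vecTail (AffineMap.lineMap p.1 p.2 ((t - p.1 0) / (p.2 0 - p.1 0)))

theorem measurable_segmentCrossing (t : ℝ) : Measurable (segmentCrossing (d := d) t) := by
  refine continuous_vecTail.measurable.comp ?_
  simp only [AffineMap.lineMap_apply_module]
  fun_prop

theorem segmentCrossing_mem_hyperplaneSlice (hK : Convex ℝ K) {a b : Fin (d + 1) → ℝ}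
    (ha : a ∈ K) (hb : b ∈ K) (hat : a 0 < t) (htb : t < b 0) :
    segmentCrossing t (a, b) ∈ hyperplaneSlice K t := by
  have hab : 0 < b 0 - a 0 := by linarith
  refine mem_image_of_mem _ ⟨hK.lineMap_mem ha hb ⟨?_, ?_⟩, ?_⟩
  · exact div_nonneg (by linarith) hab.le
  · exact (div_le_one hab).2 (by linarith)
  · simp only [mem_ofPred_eq, AffineMap.lineMap_apply_module, Pi.add_apply, Pi.smul_apply,
      smul_eq_mul]
    field_simp
    ring

noncomputable def crossingMeasure (μ : Measure (Fin (d + 1) → ℝ)) (t : ℝ) :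
    Measure (Fin d → ℝ) :=
  ((μ.restrict {x | x 0 < t}).prod (μ.restrict {x | t < x 0})).map (segmentCrossing t)

theorem crossingMeasure_univ_le [SFinite μ] :
    crossingMeasure μ t univ ≤ μ univ * μ univ := by
  rw [crossingMeasure, Measure.map_apply (measurable_segmentCrossing t) MeasurableSet.univ,
    preimage_univ, ← univ_prod_univ, Measure.prod_prod]
  exact mul_le_mul' (Measure.restrict_apply_le _ _) (Measure.restrict_apply_le _ _)

theorem measure_mul_measure_le_crossingMeasure [SFinite μ] (hK : Convex ℝ K) :
    μ (K ∩ {x | x 0 < t}) * μ (K ∩ {x | t < x 0}) ≤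
      crossingMeasure μ t (hyperplaneSlice K t) := by
  rw [← Measure.restrict_eq_self μ inter_subset_right,
    ← Measure.restrict_eq_self μ (s := K ∩ {x | t < x 0}) inter_subset_right,
    ← Measure.prod_prod]
  refine (measure_mono ?_).trans
    (Measure.le_map_apply (measurable_segmentCrossing t).aemeasurable _)
  rintro ⟨a, b⟩ ⟨⟨ha, hat⟩, hb, htb⟩
  exact segmentCrossing_mem_hyperplaneSlice hK ha hb hat htb

end Slices

section Induction

variable {d : ℕ}

theorem isWeakNet_biUnion_image_vecCons (μ : Measure (Fin (d + 1) → ℝ)) [IsFiniteMeasure μ]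
    {δ : ℝ≥0∞} {n : ℕ} {t : ℕ → ℝ} (h_first : μ.map (· 0) (Iio (t 0)) ≤ δ)
    (h_gap : ∀ k < n, μ.map (· 0) (Ioo (t k) (t (k + 1))) ≤ δ)
    (h_last : μ.map (· 0) (Ioi (t n)) ≤ δ) {X₁ X₂ : ℕ → Finset (Fin d → ℝ)}
    (hX₁ : ∀ k, IsWeakNet (traceMeasure μ (t k)) δ (X₁ k))
    (hX₂ : ∀ k, IsWeakNet (crossingMeasure μ (t k)) (δ * δ) (X₂ k)) :
    IsWeakNet μ (5 * δ)
      ((Finset.range (n + 1)).biUnion fun k => (X₁ k ∪ X₂ k).image (Matrix.vecCons (t k))) := by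
  intro K hK hKc hμK
  suffices ∃ k ≤ n, ∃ y ∈ X₁ k ∪ X₂ k, Matrix.vecCons (t k) y ∈ K by
    obtain ⟨k, hk, y, hy, hyK⟩ := this
    exact ⟨_, Finset.mem_biUnion.2 ⟨k, Finset.mem_range.2 (Nat.lt_succ_of_le hk),
      Finset.mem_image_of_mem _ hy⟩, hyK⟩
  have h_meas : Measurable fun x : Fin (d + 1) → ℝ => x 0 := measurable_pi_apply 0
  set κ := (μ.restrict K).map (· 0)
  have hκ_apply : ∀ s, MeasurableSet s → κ s = μ (K ∩ {x | x 0 ∈ s}) := fun s hs => by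
    rw [Measure.map_apply h_meas hs, Measure.restrict_apply (h_meas hs), inter_comm]; rfl
  have hκ_le : ∀ s, κ s ≤ μ.map (· 0) s :=
    Measure.le_iff'.1 (Measure.map_mono Measure.restrict_le_self h_meas)
  obtain ⟨k, hk, h_heavy | ⟨h_below, h_above⟩⟩ := exists_level_heavy_or_split
    ((hκ_le _).trans h_first) (fun k hk => (hκ_le _).trans (h_gap k hk))
    ((hκ_le _).trans h_last)
    (by rwa [Measure.map_apply h_meas MeasurableSet.univ, preimage_univ,
      Measure.restrict_apply_univ])
  · rw [hκ_apply _ (measurableSet_singleton _)] at h_heavy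
    obtain ⟨y, hy, hyK⟩ := (hX₁ k).exists_vecCons_mem hK hKc
      (h_heavy.trans (measure_inter_le_traceMeasure μ K))
    exact ⟨k, hk, y, Finset.mem_union_left _ hy, hyK⟩
  · rw [hκ_apply _ measurableSet_Iio] at h_below
    rw [hκ_apply _ measurableSet_Ioi] at h_above
    obtain ⟨y, hy, hyK⟩ := (hX₂ k).exists_vecCons_mem hK hKc
      ((mul_le_mul' h_below h_above).trans (measure_mul_measure_le_crossingMeasure μ hKc))
    exact ⟨k, hk, y, Finset.mem_union_right _ hy, hyK⟩

theorem exists_hasWeakNetsOfCard_succ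
    (ih : ∀ {ε : ℝ≥0∞}, 0 < ε → ∃ c, HasWeakNetsOfCard (Fin d → ℝ) ε c) {ε : ℝ≥0∞}
    (hε : 0 < ε) :
    ∃ c, HasWeakNetsOfCard (Fin (d + 1) → ℝ) ε c := by
  set δ := ε / 5
  have hδ : 0 < δ := ENNReal.div_pos hε.ne' (by norm_num)
  have h5δ : 5 * δ = ε := ENNReal.mul_div_cancel (by norm_num) (by norm_num)
  obtain ⟨c₁, hc₁⟩ := ih hδ
  obtain ⟨c₂, hc₂⟩ := ih (ENNReal.mul_pos hδ.ne' hδ.ne')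
  obtain ⟨n, hn⟩ := ENNReal.exists_inv_nat_lt hδ.ne'
  have hη : ((n : ℝ≥0∞) + 2)⁻¹ ≤ δ := (ENNReal.inv_le_inv.2 le_self_add).trans hn.le
  refine ⟨(n + 1) * (c₁ + c₂), fun μ _ => ?_⟩
  have : IsProbabilityMeasure (μ.map (· 0)) :=
    Measure.isProbabilityMeasure_map (measurable_pi_apply 0).aemeasurable
  obtain ⟨t, h_first, h_gap, h_last⟩ := exists_levels_measure_gaps_le (μ.map (· 0)) n
  choose X₁ hX₁_card hX₁ using fun k => hc₁.exists_of_measure_univ_le_one hδ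
    ((traceMeasure_univ_le (t := t k) μ).trans_eq measure_univ)
  choose X₂ hX₂_card hX₂ using fun k => hc₂.exists_of_measure_univ_le_one
    (ENNReal.mul_pos hδ.ne' hδ.ne') ((crossingMeasure_univ_le (t := t k) μ).trans_eq (by simp))
  refine ⟨_, ?_, h5δ ▸
    isWeakNet_biUnion_image_vecCons μ (h_first.trans hη) (fun k hk => (h_gap k hk).trans hη)
      (h_last.trans hη) hX₁ hX₂⟩
  refine (Finset.card_biUnion_le_card_mul _ _ (c₁ + c₂) fun k _ => ?_).trans_eq (by simp)
  exact Finset.card_image_le.trans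
    ((Finset.card_union_le _ _).trans (add_le_add (hX₁_card k) (hX₂_card k)))

theorem exists_hasWeakNetsOfCard (d : ℕ) {ε : ℝ≥0∞} (hε : 0 < ε) :
    ∃ c, HasWeakNetsOfCard (Fin d → ℝ) ε c := by
  induction d generalizing ε with
  | zero =>
    refine ⟨1, fun μ _ => ⟨{0}, by simp, fun K _ _ hμK => ?_⟩⟩
    obtain ⟨x, hx⟩ := nonempty_of_measure_ne_zero (hε.trans_le hμK).ne'
    exact ⟨x, by simp [Subsingleton.elim x 0], hx⟩
  | succ d ih => exact exists_hasWeakNetsOfCard_succ ih hε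

end Induction

/-- For every ε > 0 and every d there is c = c(ε,d) such that for every probability
measure μ on ℝ^d there is a set of at most c points meeting every compact convex set
of μ-measure at least ε. -/
theorem weak_net_for_measures (ε : ℝ) (hε : 0 < ε) (d : ℕ) :
    ∃ c : ℕ, ∀ μ : Measure (Fin d → ℝ), IsProbabilityMeasure μ →
      ∃ X : Finset (Fin d → ℝ), X.card ≤ c ∧
        ∀ K : Set (Fin d → ℝ), IsCompact K → Convex ℝ K →
          ENNReal.ofReal ε ≤ μ K → ∃ x ∈ X, x ∈ K :=
  exists_hasWeakNetsOfCard d (ENNReal.ofReal_pos.2 hε)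
end

section
/- For every 0 < α ≤ 1 and every dimension d there exists δ = δ(α,d) > 0 such that for every n ≥ d+1, any family of n convex sets in R^d containing at least α·C(n,d+1) intersecting subfamilies of size d+1 contains an intersecting subfamily of at least δn sets (fractional Helly theorem of Katchalski–Liu). -/
/-!
Replace every set by the convex hull of finitely many witness points of the intersecting
`(d+1)`-tuples, so that all intersections become compact, and fix a continuous strictly convex
function `f` (the squared Euclidean norm). For an intersecting `(d+1)`-tuple `S`, applying
Helly's theorem to the sets of `S` together with the sublevel set `{f < min_{⋂ S} f}` shows that
the minimiser of `f` on `⋂ S` still minimises `f` on `⋂ (S \ {i})` for some `i ∈ S`. Minimisers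
are unique, so all tuples with the same `d`-set `S \ {i}` share a point. By pigeonhole one
`d`-set arises from at least `α C(n,d+1) / C(n,d) ≥ α n / (d+1)²` tuples, and the union of
these tuples is the required intersecting subfamily.
-/

open Finset Module Set

theorem Convex.inter_biInter_nonempty_of_forall_erase {ι 𝕜 E : Type*} [Field 𝕜] [LinearOrder 𝕜]
    [IsStrictOrderedRing 𝕜] [AddCommGroup E] [Module 𝕜 E] [FiniteDimensional 𝕜 E]
    [DecidableEq ι] {K : Set E} {C : ι → Set E} {s : Finset ι} (hs : #s = finrank 𝕜 E + 1)
    (hK : Convex 𝕜 K) (hC : ∀ i ∈ s, Convex 𝕜 (C i)) (hs_inter : (⋂ i ∈ s, C i).Nonempty)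
    (herase : ∀ i ∈ s, (K ∩ ⋂ j ∈ s.erase i, C j).Nonempty) :
    (K ∩ ⋂ i ∈ s, C i).Nonempty := by
  have key : (⋂ o ∈ insertNone s, Option.elim o K C).Nonempty := by
    refine Convex.helly_theorem' (𝕜 := 𝕜) ?_ fun I hI hIcard => ?_
    · rintro (_ | i) hi
      · exact hK
      · exact hC i (mem_insertNone.1 hi i rfl)
    obtain ⟨o, ho, hoI⟩ : ∃ o ∈ insertNone s, o ∉ I :=
      exists_mem_notMem_of_card_lt_card (by rw [card_insertNone]; omega)
    rcases o with _ | i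
    · refine hs_inter.mono (subset_iInter₂ fun o ho' => ?_)
      rcases o with _ | i
      · exact absurd ho' hoI
      · exact biInter_subset_of_mem (mem_insertNone.1 (hI ho') i rfl)
    · refine (herase i (mem_insertNone.1 ho i rfl)).mono (subset_iInter₂ fun o ho' => ?_)
      rcases o with _ | j
      · exact inter_subset_left
      · refine inter_subset_right.trans (biInter_subset_of_mem (mem_erase.2 ⟨?_, ?_⟩))
        · rintro rfl; exact hoI ho'
        · exact mem_insertNone.1 (hI ho') j rfl
  obtain ⟨x, hx⟩ := key
  rw [mem_iInter₂] at hx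
  exact ⟨x, hx none (by simp), mem_iInter₂.2 fun i hi => hx (some i) (by simpa using hi)⟩

theorem IsMinOn.exists_isMinOn_biInter_erase {ι 𝕜 E β : Type*} [Field 𝕜] [LinearOrder 𝕜]
    [IsStrictOrderedRing 𝕜] [AddCommGroup E] [Module 𝕜 E] [FiniteDimensional 𝕜 E]
    [AddCommMonoid β] [LinearOrder β] [IsOrderedCancelAddMonoid β] [Module 𝕜 β]
    [PosSMulStrictMono 𝕜 β] [DecidableEq ι] {f : E → β} {C : ι → Set E} {s : Finset ι} {x : E}
    (hf : ConvexOn 𝕜 univ f) (hs : #s = finrank 𝕜 E + 1) (hC : ∀ i ∈ s, Convex 𝕜 (C i))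
    (hx : x ∈ ⋂ i ∈ s, C i) (hmin : IsMinOn f (⋂ i ∈ s, C i) x) :
    ∃ i ∈ s, IsMinOn f (⋂ j ∈ s.erase i, C j) x := by
  by_contra! h
  simp only [isMinOn_iff, not_forall, not_le, exists_prop] at h
  have herase : ∀ i ∈ s, ({y | y ∈ univ ∧ f y < f x} ∩ ⋂ j ∈ s.erase i, C j).Nonempty := by
    intro i hi
    obtain ⟨y, hy, hlt⟩ := h i hi
    exact ⟨y, ⟨mem_univ y, hlt⟩, hy⟩
  obtain ⟨y, ⟨-, hlt⟩, hy⟩ :=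
    Convex.inter_biInter_nonempty_of_forall_erase hs (hf.convex_lt _) hC ⟨x, hx⟩ herase
  exact (hmin hy).not_gt hlt

theorem exists_card_le_choose_mul_card_biInter_nonempty {α E : Type*} [Fintype α] [DecidableEq α]
    {d : ℕ} {G : α → Set E} {p : Finset α → E} {𝒮 : Finset (Finset α)}
    (hcard : ∀ S ∈ 𝒮, #S = d + 1) (hp : ∀ S ∈ 𝒮, ∃ i ∈ S, p (S.erase i) ∈ ⋂ j ∈ S, G j) :
    ∃ T : Finset α, #𝒮 ≤ (Fintype.card α).choose d * #T ∧ (⋂ j ∈ T, G j).Nonempty := by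
  rcases 𝒮.eq_empty_or_nonempty with rfl | h𝒮
  · exact ⟨∅, by simp, p ∅, by simp⟩
  have : Nonempty α := by
    obtain ⟨S, hS⟩ := h𝒮
    obtain ⟨a, -⟩ := card_pos.1 (by rw [hcard S hS]; omega)
    exact ⟨a⟩
  choose! i hi hpi using hp
  set D : Finset α → Finset α := fun S => S.erase (i S)
  obtain ⟨D₀, hD₀, hmax⟩ := (𝒮.image D).exists_max_image (fun D₀ => #{S ∈ 𝒮 | D S = D₀})
    (h𝒮.image D)
  set fiber := {S ∈ 𝒮 | D S = D₀}
  have hinsert : ∀ S ∈ fiber, S = insert (i S) D₀ := by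
    intro S hS
    rw [mem_filter] at hS
    rw [← hS.2, insert_erase (hi S hS.1)]
  have himage : #(𝒮.image D) ≤ (Fintype.card α).choose d := by
    rw [← card_univ, ← card_powersetCard]
    refine Finset.card_le_card fun D₁ hD₁ => ?_
    obtain ⟨S, hS, rfl⟩ := mem_image.1 hD₁
    rw [mem_powersetCard_univ, card_erase_of_mem (hi S hS), hcard S hS, Nat.add_sub_cancel]
  set T := fiber.biUnion id
  have hfiber : #fiber ≤ #T := by
    refine (Finset.card_le_card fun S hS => ?_).trans (card_image_le (f := (insert · D₀)) (s := T))
    exact mem_image.2 ⟨i S, mem_biUnion.2 ⟨S, hS, hi S (mem_filter.1 hS).1⟩, (hinsert S hS).symm⟩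
  refine ⟨T, ?_, p D₀, mem_iInter₂.2 fun j hj => ?_⟩
  · calc #𝒮 ≤ #fiber * #(𝒮.image D) := card_le_mul_card_image _ _ hmax
      _ ≤ #T * (Fintype.card α).choose d := Nat.mul_le_mul hfiber himage
      _ = _ := mul_comm _ _
  · obtain ⟨S, hS, hjS⟩ := mem_biUnion.1 hj
    obtain ⟨hS𝒮, hSD⟩ := mem_filter.1 hS
    rw [← hSD]
    exact mem_iInter₂.1 (hpi S hS𝒮) j hjS

theorem exists_card_le_choose_mul_card_of_isCompact {ι E : Type*} [Fintype ι] [DecidableEq ι]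
    [TopologicalSpace E] [T2Space E] [AddCommGroup E] [Module ℝ E] [FiniteDimensional ℝ E]
    {f : E → ℝ} (hf : StrictConvexOn ℝ univ f) (hfc : Continuous f) {G : ι → Set E}
    (hG : ∀ i, IsCompact (G i) ∧ Convex ℝ (G i)) {𝒮 : Finset (Finset ι)}
    (h𝒮 : ∀ S ∈ 𝒮, #S = finrank ℝ E + 1 ∧ (⋂ i ∈ S, G i).Nonempty) :
    ∃ T : Finset ι, #𝒮 ≤ (Fintype.card ι).choose (finrank ℝ E) * #T ∧
      (⋂ i ∈ T, G i).Nonempty := by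
  have hconvex : ∀ D : Finset ι, Convex ℝ (⋂ i ∈ D, G i) := fun D =>
    convex_iInter₂ fun i _ => (hG i).2
  -- `p D` is the minimiser of `f` on `⋂ i ∈ D, G i`, whenever there is one
  have hp : ∀ D : Finset ι, ∃ x, ∀ y ∈ ⋂ i ∈ D, G i, IsMinOn f (⋂ i ∈ D, G i) y → y = x := by
    intro D
    by_cases h : ∃ x ∈ ⋂ i ∈ D, G i, IsMinOn f (⋂ i ∈ D, G i) x
    · obtain ⟨x, hx, hxmin⟩ := h
      exact ⟨x, fun y hy hymin =>
        (hf.subset (subset_univ _) (hconvex D)).eq_of_isMinOn hymin hxmin hy hx⟩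
    · exact ⟨0, fun y hy hymin => absurd ⟨y, hy, hymin⟩ h⟩
  choose p hp using hp
  refine exists_card_le_choose_mul_card_biInter_nonempty (p := p) (fun S hS => (h𝒮 S hS).1)
    fun S hS => ?_
  obtain ⟨hcard, hne⟩ := h𝒮 S hS
  obtain ⟨i₀, hi₀⟩ : S.Nonempty := card_pos.1 (by omega)
  have hcompact : IsCompact (⋂ i ∈ S, G i) :=
    (hG i₀).1.of_isClosed_subset (isClosed_biInter fun i _ => (hG i).1.isClosed)
      (biInter_subset_of_mem hi₀)
  obtain ⟨x, hx, hxmin⟩ := hcompact.exists_isMinOn hne hfc.continuousOn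
  obtain ⟨i, hi, hmin⟩ :=
    hxmin.exists_isMinOn_biInter_erase hf.convexOn hcard (fun i _ => (hG i).2) hx
  exact ⟨i, hi, hp _ x (biInter_mono (erase_subset i S) (fun _ _ => subset_rfl) hx) hmin ▸ hx⟩

theorem exists_isCompact_convex_subset_biInter_nonempty {ι E : Type*} [TopologicalSpace E]
    [AddCommGroup E] [Module ℝ E] [IsTopologicalAddGroup E] [ContinuousSMul ℝ E]
    {F : ι → Set E} (hF : ∀ i, Convex ℝ (F i)) (𝒮 : Finset (Finset ι))
    (h𝒮 : ∀ S ∈ 𝒮, (⋂ i ∈ S, F i).Nonempty) :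
    ∃ G : ι → Set E, (∀ i, IsCompact (G i) ∧ Convex ℝ (G i) ∧ G i ⊆ F i) ∧
      ∀ S ∈ 𝒮, (⋂ i ∈ S, G i).Nonempty := by
  choose p hp using fun S : 𝒮 => h𝒮 S S.2
  refine ⟨fun i => convexHull ℝ (p '' {S | i ∈ S.1}), fun i => ⟨?_, convex_convexHull ℝ _, ?_⟩,
    fun S hS => ⟨p ⟨S, hS⟩, mem_iInter₂.2 fun i hi => subset_convexHull ℝ _ ⟨⟨S, hS⟩, hi, rfl⟩⟩⟩
  · exact (toFinite _).isCompact_convexHull ℝ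
  · refine convexHull_min ?_ (hF i)
    rintro _ ⟨S, hi, rfl⟩
    exact mem_iInter₂.1 (hp S) i hi

theorem strictConvexOn_norm_toLp_sq (d : ℕ) :
    StrictConvexOn ℝ univ fun x : Fin d → ℝ => ‖WithLp.toLp 2 x‖ ^ 2 := by
  have h : StrictConvexOn ℝ univ fun x : EuclideanSpace ℝ (Fin d) => ‖x‖ ^ 2 :=
    (strongConvexOn_iff_convex.2 (by simpa using convexOn_const 0 convex_univ)).strictConvexOn
      two_pos
  refine ⟨convex_univ, fun x _ y _ hxy a b ha hb hab => ?_⟩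
  simpa using h.2 (mem_univ (WithLp.toLp 2 x)) (mem_univ (WithLp.toLp 2 y))
    ((WithLp.toLp_injective 2).ne hxy) ha hb hab

theorem Nat.mul_choose_le_sq_mul_choose_succ {n d : ℕ} (hdn : d < n) :
    n * n.choose d ≤ (d + 1) ^ 2 * n.choose (d + 1) := by
  obtain ⟨m, rfl⟩ := Nat.exists_eq_add_of_lt hdn
  have h := Nat.choose_succ_right_eq (d + m + 1) d
  rw [show d + m + 1 - d = m + 1 by omega] at h
  calc (d + m + 1) * (d + m + 1).choose d ≤ (d + 1) * (m + 1) * (d + m + 1).choose d :=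
        Nat.mul_le_mul_right _ (by nlinarith)
    _ = (d + 1) * ((d + m + 1).choose (d + 1) * (d + 1)) := by rw [h]; ring
    _ = _ := by ring

theorem div_sq_mul_le_of_le_choose_mul {n d : ℕ} (hdn : d < n) {α s t : ℝ} (hα : 0 ≤ α)
    (hs : α * n.choose (d + 1) ≤ s) (hst : s ≤ n.choose d * t) : α / (d + 1) ^ 2 * n ≤ t := by
  have hchoose : (0 : ℝ) < n.choose d := by exact_mod_cast Nat.choose_pos hdn.le
  have hmul : (n * n.choose d : ℝ) ≤ (d + 1) ^ 2 * n.choose (d + 1) := by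
    exact_mod_cast Nat.mul_choose_le_sq_mul_choose_succ hdn
  rw [div_mul_eq_mul_div, div_le_iff₀ (by positivity)]
  refine le_of_mul_le_mul_right ?_ hchoose
  calc α * n * n.choose d ≤ α * ((d + 1) ^ 2 * n.choose (d + 1)) := by
        rw [mul_assoc]; exact mul_le_mul_of_nonneg_left hmul hα
    _ ≤ (d + 1) ^ 2 * (n.choose d * t) := by nlinarith
    _ = t * (d + 1) ^ 2 * n.choose d := by ring

theorem fractional_helly_general (α : ℝ) (hα0 : 0 < α) (d : ℕ) :
    ∃ δ : ℝ, 0 < δ ∧ ∀ n : ℕ, n ≥ d + 1 → ∀ F : Fin n → Set (Fin d → ℝ),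
      (∀ i, Convex ℝ (F i)) →
      α * (n.choose (d + 1) : ℝ) ≤
        ({S : Finset (Fin n) | S.card = d + 1 ∧ (⋂ i ∈ S, F i).Nonempty}.ncard : ℝ) →
      ∃ S : Finset (Fin n), δ * n ≤ S.card ∧ (⋂ i ∈ S, F i).Nonempty := by
  classical
  refine ⟨α / (d + 1) ^ 2, by positivity, fun n hn F hF hcount => ?_⟩
  set 𝒮 : Finset (Finset (Fin n)) := {S | #S = d + 1 ∧ (⋂ i ∈ S, F i).Nonempty}
  have h𝒮 : ∀ S ∈ 𝒮, #S = d + 1 ∧ (⋂ i ∈ S, F i).Nonempty := fun S hS => (mem_filter.1 hS).2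
  rw [← coe_filter_univ, ncard_coe_finset] at hcount
  obtain ⟨G, hG, hG𝒮⟩ :=
    exists_isCompact_convex_subset_biInter_nonempty hF 𝒮 fun S hS => (h𝒮 S hS).2
  obtain ⟨T, hT, hTG⟩ := exists_card_le_choose_mul_card_of_isCompact
    (strictConvexOn_norm_toLp_sq d) (by fun_prop) (fun i => ⟨(hG i).1, (hG i).2.1⟩) (𝒮 := 𝒮)
    (by simpa only [finrank_fin_fun] using fun S hS => ⟨(h𝒮 S hS).1, hG𝒮 S hS⟩)
  rw [finrank_fin_fun, Fintype.card_fin] at hT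
  exact ⟨T, div_sq_mul_le_of_le_choose_mul hn hα0.le hcount (by exact_mod_cast hT),
    hTG.mono (biInter_mono subset_rfl fun i _ => (hG i).2.2)⟩

/-- Fractional Helly (Katchalski–Liu): for 0 < α ≤ 1 and d there is δ > 0 such that any
family of n ≥ d+1 convex sets in ℝ^d with at least α·C(n,d+1) intersecting (d+1)-tuples
contains an intersecting subfamily of at least δn sets. -/
theorem fractional_helly (α : ℝ) (hα0 : 0 < α) (hα1 : α ≤ 1) (d : ℕ) :
    ∃ δ : ℝ, 0 < δ ∧ ∀ n : ℕ, n ≥ d + 1 → ∀ F : Fin n → Set (Fin d → ℝ),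
      (∀ i, Convex ℝ (F i)) →
      α * (n.choose (d + 1) : ℝ) ≤
        ({S : Finset (Fin n) | S.card = d + 1 ∧ (⋂ i ∈ S, F i).Nonempty}.ncard : ℝ) →
      ∃ S : Finset (Fin n), δ * n ≤ S.card ∧ (⋂ i ∈ S, F i).Nonempty :=
  fractional_helly_general α hα0 d
end

section
/- Let A be a real m×n matrix and b a real vector in R^m. Then the system Ax ≤ b has a solution x ≥ 0 if and only if for every row vector y ≥ 0 in R^m with yA ≥ 0 the inequality yb ≥ 0 holds (a variant of Farkas's lemma). -/
/-!
Farkas' lemma in its homogeneous form (a linear form that is nonnegative wherever finitely many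
linear forms `φᵢ` are, is a nonnegative combination of them) has a purely algebraic proof by
induction on the number of forms: if dropping `φₐ` breaks the implication at some `x₀`, then
`φₐ x₀ < 0`, and projecting along `x₀` onto `ker φₐ` reduces to one form fewer. Homogenizing
with an extra coordinate gives the alternative for `C x ≤ d`, and `x ≥ 0, A x ≤ b` is the system
`[A; -I] x ≤ [b; 0]`.
-/

open Finset Matrix

theorem Finset.sum_insert_update_smul {R M ι : Type*} [Semiring R] [AddCommMonoid M] [Module R M]
    [DecidableEq ι] {s : Finset ι} {a : ι} (ha : a ∉ s) (y : ι → R) (t : R) (f : ι → M) :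
    ∑ i ∈ insert a s, Function.update y a t i • f i = t • f a + ∑ i ∈ s, y i • f i := by
  rw [sum_insert ha, Function.update_self,
    sum_congr rfl fun i hi => by rw [Function.update_of_ne (ne_of_mem_of_not_mem hi ha)]]

section Farkas

variable {K V ι : Type*} [Field K] [LinearOrder K] [IsStrictOrderedRing K]
  [AddCommGroup V] [Module K V]

theorem Module.Dual.exists_nonneg_combination_of_nonneg_imp_nonneg (s : Finset ι)
    (φ : ι → Module.Dual K V) (ψ : Module.Dual K V)
    (h : ∀ x, (∀ i ∈ s, 0 ≤ φ i x) → 0 ≤ ψ x) :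
    ∃ y : ι → K, 0 ≤ y ∧ ψ = ∑ i ∈ s, y i • φ i := by
  classical
  induction s using Finset.induction_on generalizing φ ψ with
  | empty =>
    refine ⟨0, le_rfl, LinearMap.ext fun x => le_antisymm ?_ (h x (by simp))⟩
    simpa using h (-x) (by simp)
  | insert a s ha ih =>
    by_cases hs : ∀ x, (∀ i ∈ s, 0 ≤ φ i x) → 0 ≤ ψ x
    · obtain ⟨y, hy, rfl⟩ := ih φ ψ hs
      refine ⟨Function.update y a 0, le_update_iff.2 ⟨le_rfl, fun j _ => hy j⟩, ?_⟩
      rw [sum_insert_update_smul ha, zero_smul, zero_add]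
    push Not at hs
    obtain ⟨x₀, hx₀, hψx₀⟩ := hs
    have hc : φ a x₀ < 0 := by
      by_contra! hc
      exact hψx₀.not_ge (h x₀ (forall_mem_insert _ _ _ |>.2 ⟨hc, hx₀⟩))
    set P : V →ₗ[K] V := LinearMap.id - ((φ a x₀)⁻¹ • φ a).smulRight x₀ with hP
    have hP_apply (f : Module.Dual K V) (x : V) :
        f (P x) = f x - (φ a x₀)⁻¹ * φ a x * f x₀ := by
      simp [hP, mul_assoc]
    have hφaP (x : V) : φ a (P x) = 0 := by
      rw [hP_apply]; field_simp [hc.ne]; ring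
    obtain ⟨z, hz, hψP⟩ := ih (fun i => φ i ∘ₗ P) (ψ ∘ₗ P) fun x hx =>
      h (P x) (forall_mem_insert _ _ _ |>.2 ⟨(hφaP x).ge, hx⟩)
    set t := (ψ x₀ - ∑ i ∈ s, z i * φ i x₀) / φ a x₀
    have ht : 0 ≤ t := div_nonneg_of_nonpos
      (by linarith [sum_nonneg fun i hi => mul_nonneg (hz i) (hx₀ i hi)]) hc.le
    refine ⟨Function.update z a t, le_update_iff.2 ⟨ht, fun j _ => hz j⟩, ?_⟩
    rw [sum_insert_update_smul ha]
    ext x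
    have hψPx := LinearMap.congr_fun hψP x
    simp only [LinearMap.comp_apply, hP_apply, LinearMap.coe_sum, Finset.sum_apply,
      LinearMap.add_apply, LinearMap.smul_apply, smul_eq_mul, mul_sub, sum_sub_distrib,
      mul_left_comm (z _),
      ← mul_sum] at hψPx ⊢
    linear_combination hψPx

theorem Module.Dual.exists_nonneg_combination_eq_zero_of_not_exists_le [Fintype ι]
    (φ : ι → Module.Dual K V) (b : ι → K) (h : ¬∃ x, ∀ i, φ i x ≤ b i) :
    ∃ y : ι → K, 0 ≤ y ∧ ∑ i, y i • φ i = 0 ∧ ∑ i, y i * b i < 0 := by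
  -- On `V × K`, the forms `(x, t) ↦ t * b i - φ i x` and `(x, t) ↦ t` are nonnegative only
  -- where `t ≤ 0`: otherwise `t⁻¹ • x` would solve the system.
  let Φ : Option ι → Module.Dual K (V × K) := fun o =>
    o.elim (LinearMap.snd K V K) fun i => b i • LinearMap.snd K V K - φ i ∘ₗ LinearMap.fst K V K
  have hΦ : ∀ p : V × K, (∀ o ∈ univ, 0 ≤ Φ o p) → 0 ≤ (-LinearMap.snd K V K) p := by
    rintro ⟨x, t⟩ hp
    have hx (i : ι) : φ i x ≤ t * b i := by simpa [Φ, mul_comm] using hp (some i) (mem_univ _)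
    simp only [LinearMap.neg_apply, LinearMap.snd_apply, Left.nonneg_neg_iff]
    by_contra! ht
    exact h ⟨t⁻¹ • x, fun i => by simpa [inv_mul_le_iff₀ ht] using hx i⟩
  obtain ⟨y, hy, hyΦ⟩ := exists_nonneg_combination_of_nonneg_imp_nonneg univ Φ _ hΦ
  refine ⟨fun i => y (some i), fun i => hy _, LinearMap.ext fun x => ?_, ?_⟩
  · simpa [Φ, Fintype.sum_option] using (LinearMap.congr_fun hyΦ (x, 0)).symm
  · have hyΦ01 := LinearMap.congr_fun hyΦ (0, 1)
    simp [Φ, Fintype.sum_option] at hyΦ01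
    linarith [show (0 : K) ≤ y none from hy none]

theorem Matrix.exists_nonneg_vecMul_eq_zero_of_not_exists_mulVec_le {m n : Type*} [Fintype m]
    [Fintype n] (C : Matrix m n K) (d : m → K) (h : ¬∃ x, C *ᵥ x ≤ d) :
    ∃ y, 0 ≤ y ∧ y ᵥ* C = 0 ∧ y ⬝ᵥ d < 0 := by
  obtain ⟨y, hy, hyC, hyd⟩ := Module.Dual.exists_nonneg_combination_eq_zero_of_not_exists_le
    (fun i => LinearMap.proj i ∘ₗ C.mulVecLin) d fun ⟨x, hx⟩ => h ⟨x, hx⟩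
  refine ⟨y, hy, dotProduct_eq_zero_iff.1 fun x => ?_, hyd⟩
  rw [← dotProduct_mulVec]
  simpa [dotProduct] using LinearMap.congr_fun hyC x

end Farkas

/-- Farkas's lemma variant: Ax ≤ b has a solution x ≥ 0 iff every y ≥ 0 with yA ≥ 0
satisfies yb ≥ 0. -/
theorem farkas_variant (m n : ℕ) (A : Matrix (Fin m) (Fin n) ℝ) (b : Fin m → ℝ) :
    (∃ x : Fin n → ℝ, 0 ≤ x ∧ A.mulVec x ≤ b) ↔
      (∀ y : Fin m → ℝ, 0 ≤ y → 0 ≤ Matrix.vecMul y A → 0 ≤ dotProduct y b) := by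
  refine ⟨fun ⟨x, hx, hAx⟩ y hy hyA => ?_, fun h => ?_⟩
  · calc 0 ≤ y ᵥ* A ⬝ᵥ x := dotProduct_nonneg_of_nonneg hyA hx
      _ = y ⬝ᵥ (A *ᵥ x) := (dotProduct_mulVec _ _ _).symm
      _ ≤ y ⬝ᵥ b := dotProduct_le_dotProduct_of_nonneg_left hAx hy
  by_contra hno
  obtain ⟨y, hy, hyC, hyd⟩ :=
    (fromRows A (-1 : Matrix (Fin n) (Fin n) ℝ)).exists_nonneg_vecMul_eq_zero_of_not_exists_mulVec_le
      (Sum.elim b 0) fun ⟨x, hx⟩ => hno ⟨x, by simpa [neg_mulVec, and_comm] using hx⟩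
  have hyA : y ∘ Sum.inl ᵥ* A = y ∘ Sum.inr := by simpa [vecMul_neg, add_neg_eq_zero] using hyC
  exact (h (y ∘ Sum.inl) (fun i => hy _) (hyA ▸ fun j => hy _)).not_gt
    (by simpa [dotProduct, Fintype.sum_sum_type] using hyd)
end
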